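/- arXiv:2411.13486 — 3 statements merged into one kernel-verified Lean document; each statement's English description precedes it below -/
import Mathlib

section
/- Let (X, μ) be a probability space, S an ergodic invertible measure-preserving transformation of (X, μ), and f : X → ℤ an integrable function with ∫ f dμ = 0. Then for μ-almost every x ∈ X there exist infinitely many positive integers n (i.e. a sequence n_k → ∞) such that ∑_{i=0}^{n-1} f(S^i x) = 0. -/
open MeasureTheory Filter
open Finset Function

/-!
Let `A` be the set of points whose Birkhoff sums never return to `0`. Along an orbit, the Birkhoff
sums at two different times of visit to `A` differ, since their difference is a Birkhoff sum
starting in `A`. Garsia's maximal ergodic theorem shows that for ergodic `S` and `∫ g < 0` the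
Birkhoff sums of `g` are a.e. bounded above. Applied to `±f - δ` and to `μ A / 2 - 𝟙_A`, it
gives orbits with `|S_n f| ≤ δ n + C` that spend a fraction at least `μ A / 2` of their time in
`A`; counting distinct integers in `[-δ n - C, δ n + C]` then forces `μ A = 0`. Finally, if no
iterate of `x` lies in `A`, every zero of the Birkhoff sums of `x` is followed by a later one.
-/

section Orbits

variable {X : Type*}

/-- Garsia's maximal function: `birkhoffMax S g n x = max_{k ≤ n} birkhoffSum S g k x`. -/
noncomputable def birkhoffMax (S : X → X) (g : X → ℝ) : ℕ → X → ℝ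
  | 0 => 0
  | n + 1 => fun x => max 0 (g x + birkhoffMax S g n (S x))

variable {S : X → X} {g : X → ℝ}

lemma birkhoffMax_succ (n : ℕ) (x : X) :
    birkhoffMax S g (n + 1) x = max 0 (g x + birkhoffMax S g n (S x)) :=
  rfl

lemma birkhoffMax_nonneg (n : ℕ) (x : X) : 0 ≤ birkhoffMax S g n x := by
  cases n with
  | zero => exact le_rfl
  | succ n => exact le_max_left _ _

lemma birkhoffMax_le_succ (n : ℕ) (x : X) :
    birkhoffMax S g n x ≤ birkhoffMax S g (n + 1) x := by
  induction n generalizing x with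
  | zero => exact birkhoffMax_nonneg 1 x
  | succ n ih => exact max_le_max le_rfl (add_le_add_right (ih (S x)) _)

lemma monotone_birkhoffMax (x : X) : Monotone fun n => birkhoffMax S g n x :=
  monotone_nat_of_le_succ fun n => birkhoffMax_le_succ n x

lemma birkhoffSum_le_birkhoffMax {k n : ℕ} (hk : k ≤ n) (x : X) :
    birkhoffSum S g k x ≤ birkhoffMax S g n x := by
  induction n generalizing k x with
  | zero => simp [Nat.le_zero.1 hk, birkhoffMax]
  | succ n ih =>
    cases k with
    | zero => simpa using birkhoffMax_nonneg (n + 1) x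
    | succ k =>
      rw [birkhoffSum_succ', birkhoffMax_succ]
      exact le_max_of_le_right (add_le_add_right (ih (by omega) (S x)) _)

lemma exists_birkhoffMax_eq (n : ℕ) (x : X) :
    ∃ k ≤ n, birkhoffMax S g n x = birkhoffSum S g k x := by
  induction n generalizing x with
  | zero => exact ⟨0, le_rfl, rfl⟩
  | succ n ih =>
    rcases max_choice 0 (g x + birkhoffMax S g n (S x)) with h | h
    · exact ⟨0, Nat.zero_le _, h⟩
    · obtain ⟨k, hk, hkx⟩ := ih (S x)
      exact ⟨k + 1, by omega, by rw [birkhoffMax_succ, h, hkx, birkhoffSum_succ']⟩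

lemma birkhoffMax_pos_iff {n : ℕ} {x : X} :
    0 < birkhoffMax S g n x ↔ ∃ k ≤ n, 0 < birkhoffSum S g k x := by
  constructor
  · intro h
    obtain ⟨k, hk, hkx⟩ := exists_birkhoffMax_eq n x
    exact ⟨k, hk, hkx ▸ h⟩
  · rintro ⟨k, hk, hkx⟩
    exact hkx.trans_le (birkhoffSum_le_birkhoffMax hk x)

/-- Off `{birkhoffMax S g (n + 1) > 0}` the left side is `-birkhoffMax S g n (S x) ≤ 0`; on it,
`g x = birkhoffMax S g (n + 1) x - birkhoffMax S g n (S x)`. -/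
lemma birkhoffMax_sub_birkhoffMax_comp_le_indicator (n : ℕ) (x : X) :
    birkhoffMax S g n x - birkhoffMax S g n (S x)
      ≤ {y | 0 < birkhoffMax S g (n + 1) y}.indicator g x := by
  have hmono := birkhoffMax_le_succ (S := S) (g := g) n x
  simp only [Set.indicator_apply, Set.mem_ofPred_eq]
  split_ifs with hx
  · rw [birkhoffMax_succ] at hx hmono
    have hpos : 0 < g x + birkhoffMax S g n (S x) := (lt_max_iff.1 hx).resolve_left (lt_irrefl 0)
    rw [max_eq_right hpos.le] at hmono
    linarith
  · linarith [birkhoffMax_nonneg (S := S) (g := g) n (S x)]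

lemma bddAbove_range_birkhoffSum_apply_iff (S : X → X) (g : X → ℝ) (x : X) :
    BddAbove (Set.range fun n => birkhoffSum S g n (S x))
      ↔ BddAbove (Set.range fun n => birkhoffSum S g n x) := by
  calc _ ↔ BddAbove ((g x + ·) '' Set.range fun n => birkhoffSum S g n (S x)) :=
        (OrderIso.addLeft (g x)).bddAbove_image.symm
    _ ↔ BddAbove (Set.range fun n => birkhoffSum S g (n + 1) x) := by
        simp only [← Set.range_comp, comp_def, birkhoffSum_succ']
    _ ↔ _ := by
        rw [← Nat.range_of_succ (fun n => birkhoffSum S g n x), bddAbove_union]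
        simp only [bddAbove_singleton, true_and, comp_def, Nat.succ_eq_add_one]

def nonReturningSet {M : Type*} [AddCommMonoid M] (S : X → X) (f : X → M) : Set X :=
  {x | ∀ n, 0 < n → birkhoffSum S f n x ≠ 0}

lemma injOn_birkhoffSum_nonReturningSet {M : Type*} [AddCancelCommMonoid M] (f : X → M)
    (x : X) :
    Set.InjOn (fun m => birkhoffSum S f m x) {m | S^[m] x ∈ nonReturningSet S f} := by
  intro m hm m' hm' heq
  wlog hle : m ≤ m' generalizing m m'
  · exact (this hm' hm heq.symm (le_of_not_ge hle)).symm
  obtain ⟨k, rfl⟩ := Nat.exists_eq_add_of_le hle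
  by_contra hk
  exact hm k (by omega) (left_eq_add.1 (heq.trans (birkhoffSum_add S f m k x)))

/-- The values `birkhoffSum S f m x` at the times `m < n` of visits to `nonReturningSet S f`
are distinct integers of absolute value at most `B`. -/
lemma birkhoffSum_indicator_nonReturningSet_le {f : X → ℤ} {x : X} {n : ℕ} {B : ℝ}
    (hB : 0 ≤ B) (hf : ∀ m < n, |((birkhoffSum S f m x : ℤ) : ℝ)| ≤ B) :
    birkhoffSum S ((nonReturningSet S f).indicator 1) n x ≤ 2 * B + 1 := by
  classical
  set T := {m ∈ range n | S^[m] x ∈ nonReturningSet S f}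
  have hmaps : ∀ m ∈ T, birkhoffSum S f m x ∈ Icc (-⌊B⌋) ⌊B⌋ := by
    intro m hm
    obtain ⟨hlo, hhi⟩ := abs_le.1 (hf m (mem_range.1 (mem_filter.1 hm).1))
    exact mem_Icc.2 ⟨neg_le.1 (Int.le_floor.2 (by push_cast; linarith)), Int.le_floor.2 hhi⟩
  have hcard := card_le_card_of_injOn _ hmaps fun m hm m' hm' =>
    injOn_birkhoffSum_nonReturningSet f x (mem_filter.1 hm).2 (mem_filter.1 hm').2
  have hfloor : 0 ≤ ⌊B⌋ := Int.floor_nonneg.2 hB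
  rw [Int.card_Icc] at hcard
  have hT : (#T : ℤ) ≤ 2 * ⌊B⌋ + 1 := by omega
  calc birkhoffSum S ((nonReturningSet S f).indicator 1) n x = (#T : ℝ) := by
        simp only [birkhoffSum, Set.indicator_apply, Pi.one_apply, sum_boole, T]
    _ ≤ ((2 * ⌊B⌋ + 1 : ℤ) : ℝ) := by exact_mod_cast hT
    _ ≤ 2 * B + 1 := by push_cast; linarith [Int.floor_le B]

lemma frequently_birkhoffSum_eq_zero {M : Type*} [AddCommMonoid M] {f : X → M} {x : X}
    (hx : ∀ m, S^[m] x ∉ nonReturningSet S f) :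
    ∃ᶠ n in atTop, 0 < n ∧ birkhoffSum S f n x = 0 := by
  have hnext (n : ℕ) (hn : birkhoffSum S f n x = 0) :
      ∃ k, 0 < k ∧ birkhoffSum S f (n + k) x = 0 := by
    obtain ⟨k, hk, hk0⟩ : ∃ k, 0 < k ∧ birkhoffSum S f k (S^[n] x) = 0 := by
      simpa [nonReturningSet] using hx n
    exact ⟨k, hk, by rw [birkhoffSum_add, hn, hk0, add_zero]⟩
  have hzeros : ∀ N, ∃ n ≥ N, birkhoffSum S f n x = 0 := by
    intro N
    induction N with
    | zero => exact ⟨0, le_rfl, birkhoffSum_zero S f x⟩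
    | succ N ih =>
      obtain ⟨n, hn, hn0⟩ := ih
      obtain ⟨k, hk, hk0⟩ := hnext n hn0
      exact ⟨n + k, by omega, hk0⟩
  refine frequently_atTop.2 fun N => ?_
  obtain ⟨n, hn, hn0⟩ := hzeros (N + 1)
  exact ⟨n, by omega, by omega, hn0⟩

end Orbits

section MeasureTheoretic

variable {X : Type*} [MeasurableSpace X] {μ : Measure X} {S : X → X} {g : X → ℝ}

lemma measurable_birkhoffSum {M : Type*} [AddCommMonoid M] [MeasurableSpace M] [MeasurableAdd₂ M]
    {f : X → M} (hS : Measurable S) (hf : Measurable f) (n : ℕ) :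
    Measurable (birkhoffSum S f n) :=
  Finset.measurable_sum _ fun i _ => hf.comp (hS.iterate i)

lemma measurable_birkhoffMax (hS : Measurable S) (hg : Measurable g) (n : ℕ) :
    Measurable (birkhoffMax S g n) := by
  induction n with
  | zero => exact measurable_const
  | succ n ih => exact measurable_const.max (hg.add (ih.comp hS))

lemma integrable_birkhoffMax (hS : MeasurePreserving S μ μ) (hg : Integrable g μ) (n : ℕ) :
    Integrable (birkhoffMax S g n) μ := by
  induction n with
  | zero => exact integrable_zero _ _ _
  | succ n ih =>
    exact (integrable_zero X ℝ μ).sup (hg.add (hS.integrable_comp_of_integrable ih))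

/-- The maximal ergodic theorem, via Garsia's proof. -/
theorem MeasureTheory.MeasurePreserving.setIntegral_birkhoffSum_pos_nonneg
    (hS : MeasurePreserving S μ μ) (hgm : Measurable g) (hgi : Integrable g μ) :
    0 ≤ ∫ x in {x | ∃ n, 0 < birkhoffSum S g n x}, g x ∂μ := by
  set E : ℕ → Set X := fun n => {x | 0 < birkhoffMax S g n x}
  have hE : ∀ n, MeasurableSet (E n) := fun n =>
    measurableSet_lt measurable_const (measurable_birkhoffMax hS.measurable hgm n)
  have hEmono : Monotone E := fun m n hmn x hx => hx.trans_le (monotone_birkhoffMax x hmn)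
  have hEunion : ⋃ n, E n = {x | ∃ n, 0 < birkhoffSum S g n x} := by
    ext x
    simp only [E, Set.mem_iUnion, Set.mem_ofPred_eq, birkhoffMax_pos_iff]
    exact ⟨fun ⟨_, k, _, hk⟩ => ⟨k, hk⟩, fun ⟨k, hk⟩ => ⟨k, k, le_rfl, hk⟩⟩
  have hEint : ∀ n, 0 ≤ ∫ x in E (n + 1), g x ∂μ := fun n => by
    have hG := integrable_birkhoffMax hS hgi n
    have hGS : Integrable (fun x => birkhoffMax S g n (S x)) μ :=
      hS.integrable_comp_of_integrable hG
    calc 0 = ∫ x, (birkhoffMax S g n x - birkhoffMax S g n (S x)) ∂μ := by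
          rw [integral_sub hG hGS, ← integral_map hS.aemeasurable (by rw [hS.map_eq]; exact hG.1),
            hS.map_eq, sub_self]
      _ ≤ ∫ x, (E (n + 1)).indicator g x ∂μ :=
          integral_mono (hG.sub hGS) (hgi.indicator (hE _))
            (birkhoffMax_sub_birkhoffMax_comp_le_indicator n)
      _ = ∫ x in E (n + 1), g x ∂μ := integral_indicator (hE _)
  have hlim := tendsto_setIntegral_of_monotone hE hEmono hgi.integrableOn
  rw [hEunion] at hlim
  exact ge_of_tendsto (hlim.comp (tendsto_add_atTop_nat 1)) (Eventually.of_forall hEint)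

theorem Ergodic.ae_bddAbove_birkhoffSum (hS : Ergodic S μ) (hgm : Measurable g)
    (hgi : Integrable g μ) (hg : ∫ x, g x ∂μ < 0) :
    ∀ᵐ x ∂μ, BddAbove (Set.range fun n => birkhoffSum S g n x) := by
  set B := {x | BddAbove (Set.range fun n => birkhoffSum S g n x)}
  have hB : MeasurableSet B :=
    measurableSet_bddAbove_range (measurable_birkhoffSum hS.measurable hgm)
  have hBinv : S ⁻¹' B = B := Set.ext (bddAbove_range_birkhoffSum_apply_iff S g)
  refine (hS.measure_self_or_compl_eq_zero hB hBinv).resolve_left fun hB0 => hg.not_ge ?_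
  have hpos : ∀ᵐ x ∂μ, x ∈ {x | ∃ n, 0 < birkhoffSum S g n x} := by
    filter_upwards [measure_eq_zero_iff_ae_notMem.1 hB0] with x hx
    by_contra hx'
    simp only [not_exists, not_lt] at hx'
    exact hx ⟨0, by rintro _ ⟨n, rfl⟩; exact hx' n⟩
  rw [← setIntegral_eq_integral_of_ae_compl_eq_zero (hpos.mono fun x hx hx' => absurd hx hx')]
  exact hS.toMeasurePreserving.setIntegral_birkhoffSum_pos_nonneg hgm hgi

theorem Ergodic.ae_birkhoffSum_le_mul_add [IsProbabilityMeasure μ] (hS : Ergodic S μ)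
    (hgm : Measurable g) (hgi : Integrable g μ) {c : ℝ} (hc : ∫ x, g x ∂μ < c) :
    ∀ᵐ x ∂μ, ∃ C, ∀ n : ℕ, birkhoffSum S g n x ≤ n * c + C := by
  have hbdd := hS.ae_bddAbove_birkhoffSum (g := g - fun _ => c) (hgm.sub measurable_const)
    (hgi.sub (integrable_const c)) (by simpa [integral_sub hgi (integrable_const c)] using hc)
  filter_upwards [hbdd] with x ⟨C, hC⟩
  refine ⟨C, fun n => ?_⟩
  have hn : birkhoffSum S (g - fun _ => c) n x ≤ C := hC ⟨n, rfl⟩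
  rw [birkhoffSum_sub, birkhoffSum_of_comp_eq (φ := fun _ => c) rfl] at hn
  simp only [Pi.smul_apply, nsmul_eq_mul] at hn
  linarith

theorem Ergodic.ae_mul_sub_le_birkhoffSum [IsProbabilityMeasure μ] (hS : Ergodic S μ)
    (hgm : Measurable g) (hgi : Integrable g μ) {c : ℝ} (hc : c < ∫ x, g x ∂μ) :
    ∀ᵐ x ∂μ, ∃ C, ∀ n : ℕ, n * c - C ≤ birkhoffSum S g n x := by
  have hle := hS.ae_birkhoffSum_le_mul_add (g := -g) hgm.neg hgi.neg (c := -c)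
    (by simpa [integral_neg] using hc)
  filter_upwards [hle] with x ⟨C, hC⟩
  refine ⟨C, fun n => ?_⟩
  have hn := hC n
  rw [birkhoffSum_neg] at hn
  linarith

theorem Ergodic.ae_abs_birkhoffSum_le_mul_add [IsProbabilityMeasure μ] (hS : Ergodic S μ)
    (hgm : Measurable g) (hgi : Integrable g μ) (hg : ∫ x, g x ∂μ = 0) {δ : ℝ}
    (hδ : 0 < δ) : ∀ᵐ x ∂μ, ∃ C, ∀ n : ℕ, |birkhoffSum S g n x| ≤ n * δ + C := by
  filter_upwards [hS.ae_birkhoffSum_le_mul_add hgm hgi (c := δ) (by linarith),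
    hS.ae_mul_sub_le_birkhoffSum hgm hgi (c := -δ) (by linarith)]
    with x ⟨C₁, h₁⟩ ⟨C₂, h₂⟩
  refine ⟨max C₁ C₂, fun n => abs_le.2 ⟨?_, ?_⟩⟩
  · linarith [h₂ n, le_max_right C₁ C₂]
  · linarith [h₁ n, le_max_left C₁ C₂]

lemma measurableSet_nonReturningSet {M : Type*} [AddCommMonoid M] [MeasurableSpace M]
    [MeasurableAdd₂ M] [MeasurableSingletonClass M] {f : X → M} (hS : Measurable S)
    (hf : Measurable f) : MeasurableSet (nonReturningSet S f) := by
  simp only [nonReturningSet, Set.ofPred_forall]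
  exact .iInter fun n => .iInter fun _ =>
    (measurable_birkhoffSum hS hf n (measurableSet_singleton 0)).compl

theorem Ergodic.measure_nonReturningSet_eq_zero [IsProbabilityMeasure μ] (hS : Ergodic S μ)
    {f : X → ℤ} (hf : Measurable f) (hfi : Integrable (fun x => (f x : ℝ)) μ)
    (hf0 : ∫ x, (f x : ℝ) ∂μ = 0) : μ (nonReturningSet S f) = 0 := by
  set A := nonReturningSet S f
  have hA := measurableSet_nonReturningSet hS.measurable hf
  by_contra hA0
  set a := μ.real A
  have ha : 0 < a := ENNReal.toReal_pos hA0 (measure_ne_top μ A)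
  have hvisits := hS.ae_mul_sub_le_birkhoffSum (measurable_one.indicator hA)
    ((integrable_const 1).indicator hA) (c := a / 2) (by rw [integral_indicator_one hA]; linarith)
  have hsums := hS.ae_abs_birkhoffSum_le_mul_add (measurable_from_top.comp hf) hfi hf0
    (δ := a / 8) (by positivity)
  obtain ⟨x, ⟨C₁, h₁⟩, ⟨C₂, h₂⟩⟩ := (hvisits.and hsums).exists
  have hC₂ : 0 ≤ C₂ := by simpa using h₂ 0
  have hbound (n : ℕ) : n * (a / 2) - C₁ ≤ 2 * (n * (a / 8) + C₂) + 1 := by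
    refine (h₁ n).trans <|
      birkhoffSum_indicator_nonReturningSet_le (by positivity) fun m hm => ?_
    have hcast :
        ((birkhoffSum S f m x : ℤ) : ℝ) = birkhoffSum S (fun y => (f y : ℝ)) m x := by
      simp [birkhoffSum]
    rw [hcast]
    refine (h₂ m).trans ?_
    gcongr
  obtain ⟨n, hn⟩ := exists_nat_gt (4 * (C₁ + 2 * C₂ + 1) / a)
  rw [div_lt_iff₀ ha] at hn
  linarith [hbound n]

end MeasureTheoretic

/-- **Krygin–Atkinson theorem.** If `S` is an ergodic invertible measure-preserving
transformation of a probability space `(X, μ)` and `f : X → ℤ` is integrable with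
zero mean, then for almost every `x` the Birkhoff sums of `f` vanish for infinitely
many positive times. -/
theorem krygin_atkinson {X : Type*} [MeasurableSpace X] (μ : Measure X)
    [IsProbabilityMeasure μ] (S : X ≃ᵐ X) (hS : Ergodic (⇑S) μ)
    (f : X → ℤ) (hf : Measurable f)
    (hfi : Integrable (fun x => (f x : ℝ)) μ)
    (hf0 : ∫ x, (f x : ℝ) ∂μ = 0) :
    ∀ᵐ x ∂μ, ∃ᶠ n in atTop,
      0 < n ∧ ∑ i ∈ Finset.range n, f ((⇑S)^[i] x) = 0 := by
  have hnull := hS.measure_nonReturningSet_eq_zero hf hfi hf0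
  have hvisits : ∀ᵐ x ∂μ, ∀ m, (⇑S)^[m] x ∉ nonReturningSet S f :=
    ae_all_iff.2 fun m => (hS.toMeasurePreserving.iterate m).quasiMeasurePreserving.ae
      (measure_eq_zero_iff_ae_notMem.1 hnull)
  filter_upwards [hvisits] with x hx
  exact frequently_birkhoffSum_eq_zero hx
end

section
/- Let (X, μ) be a probability space, S an ergodic invertible measure-preserving transformation of (X, μ), and f : X → ℤ an integrable function with ∫ f dμ = 0. Then for every measurable set B ⊆ X with μ(B) > 0, for μ-almost every x ∈ B there exist infinitely many positive integers n such that S^n x ∈ B and ∑_{i=0}^{n-1} f(S^i x) = 0. -/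
/-!
Let `D ⊆ B` be the set of points that never come back to `B` with vanishing Birkhoff sum. If
`S^k x` and `S^l x` (`k < l`) both lie in `D`, then `∑_{k ≤ i < l} f(S^i x) ≠ 0`, so the visit
times `k < N` of the orbit of `x` to `D` carry pairwise distinct integer sums `∑_{i<k} f(S^i x)`;
there are therefore at most `2 max_{k<N} |∑_{i<k} f(S^i x)| + 1` of them. By the mean ergodic
theorem some block length `m` has `‖∑_{i<m} f ∘ S^i‖₁ ≤ εm`, and cutting `[0, N)` into such
blocks shows that this maximum is `o(N)` in `L¹`, whereas the expected number of visits is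
`N μ(D)`. Hence `μ(D) = 0`. A point of `B` with only finitely many zero-sum returns lands in `D`
at its last one, so the exceptional set lies in the null set `⋃ₙ S⁻ⁿ D`.
-/

open MeasureTheory Filter Topology Finset

section BirkhoffSum

variable {α : Type*} {T : α → α}

theorem birkhoffSum_mul {M : Type*} [AddCommMonoid M] (T : α → α) (g : α → M) (m n : ℕ)
    (x : α) : birkhoffSum T g (m * n) x = birkhoffSum T^[m] (birkhoffSum T g m) n x := by
  induction n with
  | zero => simp [birkhoffSum_zero]
  | succ n ih => rw [Nat.mul_succ, birkhoffSum_add, ih, birkhoffSum_succ, Function.iterate_mul]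

theorem abs_birkhoffSum_le (g : α → ℝ) (n : ℕ) (x : α) :
    |birkhoffSum T g n x| ≤ birkhoffSum T (fun y => |g y|) n x :=
  abs_sum_le_sum_abs _ _

theorem monotone_birkhoffSum_of_nonneg {g : α → ℝ} (hg : 0 ≤ g) (x : α) :
    Monotone (birkhoffSum T g · x) := fun _ _ hmn =>
  sum_le_sum_of_subset_of_nonneg (range_subset_range.2 hmn) fun _ _ _ => hg _

theorem apply_iterate_le_birkhoffSum {g : α → ℝ} (hg : 0 ≤ g) {i n : ℕ} (hi : i < n) (x : α) :
    g (T^[i] x) ≤ birkhoffSum T g n x :=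
  single_le_sum (f := fun k => g (T^[k] x)) (fun _ _ => hg _) (mem_range.2 hi)

/-- Cut `[0, k)` into blocks of length `m`: the full blocks contribute their Birkhoff sums, and the
last, partial one is bounded by the block sum of `|g|`, that is, by `c` plus its excess over `c`. -/
theorem abs_birkhoffSum_le_blocks (g : α → ℝ) {m Q k : ℕ} (hm : 0 < m) (hk : k < m * Q) (c : ℝ)
    (x : α) :
    |birkhoffSum T g k x| ≤ birkhoffSum T^[m] (fun y => |birkhoffSum T g m y|) Q x
      + birkhoffSum T^[m] (fun y => (birkhoffSum T (fun z => |g z|) m y - c)⁺) Q x + c := by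
  obtain ⟨q, r, hr, rfl⟩ : ∃ q r, r < m ∧ k = m * q + r :=
    ⟨k / m, k % m, Nat.mod_lt _ hm, (Nat.div_add_mod k m).symm⟩
  have hq : q < Q := Nat.lt_of_mul_lt_mul_left (lt_of_le_of_lt (Nat.le_add_right _ r) hk)
  set W := birkhoffSum T (fun z => |g z|) m
  have hfull : |birkhoffSum T g (m * q) x|
      ≤ birkhoffSum T^[m] (fun y => |birkhoffSum T g m y|) Q x := by
    rw [birkhoffSum_mul]
    exact (abs_birkhoffSum_le _ _ _).trans
      (monotone_birkhoffSum_of_nonneg (fun _ => abs_nonneg _) x hq.le)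
  have hpartial : |birkhoffSum T g r (T^[m * q] x)|
      ≤ birkhoffSum T^[m] (fun y => (W y - c)⁺) Q x + c :=
    calc |birkhoffSum T g r (T^[m * q] x)| ≤ W (T^[m * q] x) :=
          (abs_birkhoffSum_le _ _ _).trans
            (monotone_birkhoffSum_of_nonneg (fun _ => abs_nonneg _) _ hr.le)
      _ ≤ (W (T^[m * q] x) - c)⁺ + c := by linarith [le_posPart (W (T^[m * q] x) - c)]
      _ ≤ _ := by
          rw [Function.iterate_mul]
          gcongr
          exact apply_iterate_le_birkhoffSum (g := fun y => (W y - c)⁺)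
            (fun _ => posPart_nonneg _) hq x
  rw [birkhoffSum_add]
  linarith [abs_add_le (birkhoffSum T g (m * q) x) (birkhoffSum T g r (T^[m * q] x))]

theorem card_filter_iterate_mem_le {f : α → ℤ} {D : Set α} [DecidablePred (· ∈ D)]
    (hD : ∀ y ∈ D, ∀ n, 0 < n → T^[n] y ∈ D → birkhoffSum T f n y ≠ 0) {N b : ℕ} {x : α}
    (hb : ∀ k < N, |birkhoffSum T f k x| ≤ b) :
    #{k ∈ range N | T^[k] x ∈ D} ≤ 2 * b + 1 := by
  have hne {k l : ℕ} (hkl : k < l) (hk : T^[k] x ∈ D) (hl : T^[l] x ∈ D) :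
      birkhoffSum T f k x ≠ birkhoffSum T f l x := by
    obtain ⟨n, rfl⟩ := Nat.exists_eq_add_of_lt hkl
    rw [show k + n + 1 = k + (n + 1) by ring] at hl ⊢
    rw [birkhoffSum_add, ne_eq, left_eq_add]
    rw [add_comm, Function.iterate_add_apply] at hl
    exact hD _ hk _ n.succ_pos hl
  have hinj : Set.InjOn (birkhoffSum T f · x) ↑({k ∈ range N | T^[k] x ∈ D} : Finset ℕ) := by
    intro k hk l hl h
    simp only [mem_coe, mem_filter] at hk hl
    rcases lt_trichotomy k l with hkl | rfl | hlk
    · exact absurd h (hne hkl hk.2 hl.2)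
    · rfl
    · exact absurd h.symm (hne hlk hl.2 hk.2)
  calc #{k ∈ range N | T^[k] x ∈ D} ≤ #(Icc (-(b : ℤ)) b) :=
        card_le_card_of_injOn _ (fun k hk => by
          simp only [mem_coe, mem_filter, mem_range] at hk
          exact mem_coe.2 (mem_Icc.2 (abs_le.1 (hb k hk.1)))) hinj
    _ = 2 * b + 1 := by simp [Int.card_Icc]; omega

def cylinderCascade (T : α → α) (f : α → ℤ) (p : α × ℤ) : α × ℤ :=
  (T p.1, p.2 + f p.1)

theorem cylinderCascade_iterate (T : α → α) (f : α → ℤ) (n : ℕ) (x : α) (z : ℤ) :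
    (cylinderCascade T f)^[n] (x, z) = (T^[n] x, z + birkhoffSum T f n x) := by
  induction n with
  | zero => simp
  | succ n ih =>
    rw [Function.iterate_succ_apply', ih, birkhoffSum_succ, cylinderCascade, add_assoc,
      Function.iterate_succ_apply']

theorem Function.exists_iterate_mem_forall_iterate_notMem {s : Set α} {x : α} (hx : x ∈ s)
    (h : ¬∃ᶠ n in atTop, T^[n] x ∈ s) : ∃ n, T^[n] x ∈ s ∧ ∀ m, 0 < m → T^[m] (T^[n] x) ∉ s := by
  rw [Nat.frequently_atTop_iff_infinite, Set.not_infinite] at h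
  obtain ⟨n, hn⟩ := h.exists_maximal ⟨0, hx⟩
  refine ⟨n, hn.prop, fun m hm hmn => ?_⟩
  rw [← Function.iterate_add_apply] at hmn
  have := hn.le_of_ge hmn (by omega)
  omega

end BirkhoffSum

namespace MeasureTheory

variable {X : Type*} [MeasurableSpace X] {μ : Measure X} {T : X → X}

theorem MeasurePreserving.integral_comp_of_aestronglyMeasurable {E : Type*}
    [NormedAddCommGroup E] [NormedSpace ℝ E] (hT : MeasurePreserving T μ μ) {g : X → E}
    (hg : AEStronglyMeasurable g μ) : ∫ x, g (T x) ∂μ = ∫ x, g x ∂μ := by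
  rw [← integral_map hT.aemeasurable (by rwa [hT.map_eq]), hT.map_eq]

theorem MeasurePreserving.integrable_birkhoffSum (hT : MeasurePreserving T μ μ) {g : X → ℝ}
    (hg : Integrable g μ) (n : ℕ) : Integrable (birkhoffSum T g n) μ :=
  integrable_finsetSum _ fun k _ => (hT.iterate k).integrable_comp_of_integrable hg

theorem MeasurePreserving.integral_birkhoffSum (hT : MeasurePreserving T μ μ) {g : X → ℝ}
    (hg : Integrable g μ) (n : ℕ) : ∫ x, birkhoffSum T g n x ∂μ = n * ∫ x, g x ∂μ := by
  have hint (k : ℕ) : Integrable (fun x => g (T^[k] x)) μ :=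
    (hT.iterate k).integrable_comp_of_integrable hg
  simp only [birkhoffSum]
  rw [integral_finsetSum _ fun k _ => hint k]
  simp [(hT.iterate _).integral_comp_of_aestronglyMeasurable hg.aestronglyMeasurable]

theorem MeasurePreserving.integral_birkhoffAverage (hT : MeasurePreserving T μ μ) {g : X → ℝ}
    (hg : Integrable g μ) {n : ℕ} (hn : n ≠ 0) :
    ∫ x, birkhoffAverage ℝ T g n x ∂μ = ∫ x, g x ∂μ := by
  simp only [birkhoffAverage, smul_eq_mul, integral_const_mul, hT.integral_birkhoffSum hg]
  field_simp

theorem Lp.integral_norm_le_norm {E : Type*} [NormedAddCommGroup E] [IsProbabilityMeasure μ]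
    {p : ENNReal} (hp : 1 ≤ p) (u : Lp E p μ) : ∫ x, ‖u x‖ ∂μ ≤ ‖u‖ := by
  rw [integral_norm_eq_lintegral_enorm (Lp.aestronglyMeasurable u),
    ← eLpNorm_one_eq_lintegral_enorm, Lp.norm_def]
  exact ENNReal.toReal_mono (Lp.eLpNorm_ne_top u)
    (eLpNorm_le_eLpNorm_of_exponent_le hp (Lp.aestronglyMeasurable u))

theorem MeasurePreserving.integrable_birkhoffAverage (hT : MeasurePreserving T μ μ) {g : X → ℝ}
    (hg : Integrable g μ) (n : ℕ) : Integrable (birkhoffAverage ℝ T g n) μ :=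
  (hT.integrable_birkhoffSum hg n).smul (n : ℝ)⁻¹

theorem MeasurePreserving.integral_abs_birkhoffAverage_le (hT : MeasurePreserving T μ μ)
    {g : X → ℝ} (hg : Integrable g μ) (n : ℕ) :
    ∫ x, |birkhoffAverage ℝ T g n x| ∂μ ≤ ∫ x, |g x| ∂μ := by
  rcases eq_or_ne n 0 with rfl | hn
  · simpa using integral_nonneg fun x => abs_nonneg (g x)
  calc ∫ x, |birkhoffAverage ℝ T g n x| ∂μ ≤ ∫ x, birkhoffAverage ℝ T (|g ·|) n x ∂μ := by
        refine integral_mono (hT.integrable_birkhoffAverage hg n).abs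
          (hT.integrable_birkhoffAverage hg.abs n) fun x => ?_
        simp only [birkhoffAverage, smul_eq_mul, abs_mul, abs_inv, Nat.abs_cast]
        gcongr
        exact abs_birkhoffSum_le _ _ _
    _ = ∫ x, |g x| ∂μ := hT.integral_birkhoffAverage hg.abs hn

theorem MeasurePreserving.coeFn_birkhoffAverage_compMeasurePreserving
    (hT : MeasurePreserving T μ μ) {p : ENNReal} {g : X → ℝ} (hg : MemLp g p μ) (n : ℕ) :
    ⇑(birkhoffAverage ℝ (Lp.compMeasurePreserving T hT) id n (hg.toLp g))
      =ᵐ[μ] birkhoffAverage ℝ T g n := by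
  set U := Lp.compMeasurePreserving (E := ℝ) (p := p) T hT
  have hU_iter (k : ℕ) : ⇑((⇑U)^[k] (hg.toLp g)) =ᵐ[μ] g ∘ T^[k] := by
    rw [Lp.compMeasurePreserving_iterate]
    exact (Lp.coeFn_compMeasurePreserving _ _).trans
      ((hT.iterate k).quasiMeasurePreserving.ae_eq_comp hg.coeFn_toLp)
  have hU_sum (m : ℕ) : ⇑(birkhoffSum U id m (hg.toLp g)) =ᵐ[μ] birkhoffSum T g m := by
    induction m with
    | zero => simpa [birkhoffSum_zero'] using Lp.coeFn_zero ℝ p μ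
    | succ m ih =>
      filter_upwards [Lp.coeFn_add (birkhoffSum U id m (hg.toLp g)) ((⇑U)^[m] (hg.toLp g)),
        ih, hU_iter m] with x h1 h2 h3
      simp only [birkhoffSum_succ, id, Pi.add_apply] at h1 ⊢
      rw [h1, h2, h3, Function.comp_apply]
  filter_upwards [Lp.coeFn_smul (n : ℝ)⁻¹ (birkhoffSum U id n (hg.toLp g)), hU_sum n]
    with x h1 h2
  simp only [birkhoffAverage, Pi.smul_apply] at h1 ⊢
  rw [h1, h2]

theorem Integrable.tendsto_integral_posPart_sub {g : X → ℝ} (hg : Integrable g μ) :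
    Tendsto (fun c : ℝ => ∫ x, (g x - c)⁺ ∂μ) atTop (𝓝 0) := by
  have h := tendsto_integral_filter_of_dominated_convergence (μ := μ) (l := atTop)
    (F := fun c x => (g x - c)⁺) (f := fun _ => 0) (fun x => |g x|)
    (.of_forall fun c => (hg.aestronglyMeasurable.sub aestronglyMeasurable_const).posPart) ?_ hg.abs
    (.of_forall fun x => tendsto_const_nhds.congr' ?_)
  · simpa using h
  · filter_upwards [eventually_ge_atTop 0] with c hc
    refine .of_forall fun x => ?_
    rw [Real.norm_eq_abs, abs_of_nonneg (posPart_nonneg _), posPart_def]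
    exact sup_le (by linarith [le_abs_self (g x)]) (abs_nonneg _)
  · filter_upwards [eventually_ge_atTop (g x)] with c hc
    exact (posPart_eq_zero.2 (by linarith)).symm

end MeasureTheory

section Ergodic

variable {X : Type*} [MeasurableSpace X] {μ : Measure X} {T : X → X}

theorem Ergodic.tendsto_integral_abs_birkhoffAverage_sub_of_memLp_two [IsProbabilityMeasure μ]
    (hT : Ergodic T μ) {g : X → ℝ} (hg : MemLp g 2 μ) :
    Tendsto (fun n => ∫ x, |birkhoffAverage ℝ T g n x - ∫ y, g y ∂μ| ∂μ) atTop (𝓝 0) := by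
  have hMP := hT.toMeasurePreserving
  set U : Lp ℝ 2 μ →L[ℝ] Lp ℝ 2 μ := (Lp.compMeasurePreservingₗᵢ ℝ T hMP).toContinuousLinearMap
  have hU_avg (n : ℕ) :
      ⇑(birkhoffAverage ℝ U id n (hg.toLp g)) =ᵐ[μ] birkhoffAverage ℝ T g n :=
    hMP.coeFn_birkhoffAverage_compMeasurePreserving hg n
  -- Von Neumann: the averages converge in L² to a `U`-fixed, hence a.e. constant, function `P`;
  -- the constant is `∫ g` because every average has integral `∫ g`.
  obtain ⟨P, hPU, hP⟩ : ∃ P, U P = P ∧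
      Tendsto (birkhoffAverage ℝ U id · (hg.toLp g)) atTop (𝓝 P) :=
    ⟨_, LinearMap.mem_eqLocus.1 (Submodule.orthogonalProjectionOnto _ (hg.toLp g)).2,
      U.tendsto_birkhoffAverage_orthogonalProjection
        (LinearIsometry.norm_toContinuousLinearMap_le _) _⟩
  obtain ⟨c, hc⟩ : ∃ c : ℝ, ⇑P =ᵐ[μ] Function.const X c := by
    refine hT.ae_eq_const_of_ae_eq_comp_ae (Lp.aestronglyMeasurable P) ?_
    have := Lp.coeFn_compMeasurePreserving P hMP
    rw [show Lp.compMeasurePreserving T hMP P = U P from rfl, hPU] at this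
    exact this.symm
  have hbound (n : ℕ) : ∫ x, |birkhoffAverage ℝ T g n x - c| ∂μ
      ≤ ‖birkhoffAverage ℝ U id n (hg.toLp g) - P‖ := by
    refine le_of_eq_of_le (integral_congr_ae ?_) (Lp.integral_norm_le_norm one_le_two _)
    filter_upwards [Lp.coeFn_sub (birkhoffAverage ℝ U id n (hg.toLp g)) P, hU_avg n, hc]
      with x h1 h2 h3
    rw [Real.norm_eq_abs, h1, Pi.sub_apply, h2, h3, Function.const_apply]
  have hlim : Tendsto (fun n => ∫ x, |birkhoffAverage ℝ T g n x - c| ∂μ) atTop (𝓝 0) :=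
    squeeze_zero (fun _ => integral_nonneg fun _ => abs_nonneg _) hbound
      (tendsto_iff_norm_sub_tendsto_zero.1 hP)
  suffices hc_eq : c = ∫ y, g y ∂μ by rwa [← hc_eq]
  have hgi : Integrable g μ := hg.integrable one_le_two
  have hclose : ∀ᶠ n in atTop,
      |∫ y, g y ∂μ - c| ≤ ∫ x, |birkhoffAverage ℝ T g n x - c| ∂μ := by
    filter_upwards [eventually_ne_atTop 0] with n hn
    calc |∫ y, g y ∂μ - c| = |∫ x, (birkhoffAverage ℝ T g n x - c) ∂μ| := by
          rw [integral_sub (hMP.integrable_birkhoffAverage hgi n) (integrable_const c),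
            hMP.integral_birkhoffAverage hgi hn]
          simp
      _ ≤ _ := abs_integral_le_integral_abs
  linarith [abs_nonpos_iff.1 (ge_of_tendsto hlim hclose)]

theorem Ergodic.tendsto_integral_abs_birkhoffAverage_sub [IsProbabilityMeasure μ]
    (hT : Ergodic T μ) {g : X → ℝ} (hg : Integrable g μ) :
    Tendsto (fun n => ∫ x, |birkhoffAverage ℝ T g n x - ∫ y, g y ∂μ| ∂μ) atTop (𝓝 0) := by
  have hMP := hT.toMeasurePreserving
  refine tendsto_order.2 ⟨fun a ha => .of_forall fun n =>
    ha.trans_le (integral_nonneg fun _ => abs_nonneg _), fun ε hε => ?_⟩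
  obtain ⟨φ, hφ, -⟩ := (memLp_one_iff_integrable.2 hg).exists_simpleFunc_eLpNorm_sub_lt
    ENNReal.one_ne_top (ENNReal.ofReal_pos.2 (by positivity : 0 < ε / 3)).ne'
  have hφi : Integrable φ μ := φ.integrable_of_isFiniteMeasure
  have hgφ : ∫ x, |g x - φ x| ∂μ < ε / 3 := by
    have := integral_norm_eq_lintegral_enorm (hg.sub hφi).aestronglyMeasurable
    rw [← eLpNorm_one_eq_lintegral_enorm] at this
    simp only [Pi.sub_apply, Real.norm_eq_abs] at this
    rw [this]
    exact ENNReal.toReal_lt_of_lt_ofReal hφ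
  filter_upwards [(hT.tendsto_integral_abs_birkhoffAverage_sub_of_memLp_two
    (φ.memLp_of_isFiniteMeasure 2 μ)).eventually_lt_const (by positivity : 0 < ε / 3)] with n hn
  have hsplit (x : X) : |birkhoffAverage ℝ T g n x - ∫ y, g y ∂μ|
      ≤ |birkhoffAverage ℝ T (g - ⇑φ) n x| + |birkhoffAverage ℝ T φ n x - ∫ y, φ y ∂μ|
        + |∫ y, φ y ∂μ - ∫ y, g y ∂μ| := by
    simp only [birkhoffAverage_sub, Pi.sub_apply]
    linarith [abs_sub_le (birkhoffAverage ℝ T g n x) (birkhoffAverage ℝ T φ n x) (∫ y, g y ∂μ),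
      abs_sub_le (birkhoffAverage ℝ T φ n x) (∫ y, φ y ∂μ) (∫ y, g y ∂μ)]
  have hmean : |∫ y, φ y ∂μ - ∫ y, g y ∂μ| ≤ ∫ x, |g x - φ x| ∂μ := by
    calc _ = |∫ x, (φ x - g x) ∂μ| := by rw [integral_sub hφi hg]
      _ ≤ ∫ x, |φ x - g x| ∂μ := abs_integral_le_integral_abs
      _ = _ := by simp_rw [abs_sub_comm]
  have hAi : Integrable (fun x => |birkhoffAverage ℝ T (g - ⇑φ) n x|) μ :=
    (hMP.integrable_birkhoffAverage (hg.sub hφi) n).abs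
  have hBi : Integrable (fun x => |birkhoffAverage ℝ T φ n x - ∫ y, φ y ∂μ|) μ :=
    ((hMP.integrable_birkhoffAverage hφi n).sub (integrable_const _)).abs
  have hABi : Integrable (fun x => |birkhoffAverage ℝ T (g - ⇑φ) n x|
      + |birkhoffAverage ℝ T φ n x - ∫ y, φ y ∂μ|) μ := hAi.add hBi
  calc ∫ x, |birkhoffAverage ℝ T g n x - ∫ y, g y ∂μ| ∂μ
      ≤ ∫ x, (|birkhoffAverage ℝ T (g - ⇑φ) n x| + |birkhoffAverage ℝ T φ n x - ∫ y, φ y ∂μ|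
        + |∫ y, φ y ∂μ - ∫ y, g y ∂μ|) ∂μ :=
        integral_mono ((hMP.integrable_birkhoffAverage hg n).sub (integrable_const _)).abs
          (hABi.add (integrable_const _)) hsplit
    _ = ∫ x, |birkhoffAverage ℝ T (g - ⇑φ) n x| ∂μ
        + ∫ x, |birkhoffAverage ℝ T φ n x - ∫ y, φ y ∂μ| ∂μ + |∫ y, φ y ∂μ - ∫ y, g y ∂μ| := by
        rw [integral_add hABi (integrable_const _), integral_add hAi hBi]
        simp
    _ < ε / 3 + ε / 3 + ε / 3 := by
        gcongr
        · exact (hMP.integral_abs_birkhoffAverage_le (hg.sub hφi) n).trans_lt hgφ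
        · exact hmean.trans_lt hgφ
    _ = ε := by ring

theorem Ergodic.eventually_exists_abs_birkhoffSum_le [IsProbabilityMeasure μ] (hT : Ergodic T μ)
    {g : X → ℝ} (hg : Integrable g μ) (hg0 : ∫ x, g x ∂μ = 0) {ε : ℝ} (hε : 0 < ε) :
    ∀ᶠ N : ℕ in atTop, ∃ Φ : X → ℝ, Integrable Φ μ ∧ ∫ x, Φ x ∂μ ≤ ε * N ∧
      ∀ x, ∀ k < N, |birkhoffSum T g k x| ≤ Φ x := by
  have hMP := hT.toMeasurePreserving
  obtain ⟨m, hm_avg, hm⟩ := (((hT.tendsto_integral_abs_birkhoffAverage_sub hg).eventually_le_const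
    (by positivity : 0 < ε / 4)).and (eventually_gt_atTop 0)).exists
  simp only [hg0, sub_zero] at hm_avg
  have hmR : (0 : ℝ) < m := by exact_mod_cast hm
  have hSm : ∫ x, |birkhoffSum T g m x| ∂μ ≤ ε / 4 * m := by
    have (x : X) : |birkhoffSum T g m x| = m * |birkhoffAverage ℝ T g m x| := by
      simp [birkhoffAverage, abs_mul, hmR.ne']
    simp_rw [this, integral_const_mul]
    nlinarith
  set W := birkhoffSum T (fun z => |g z|) m
  have hW : Integrable W μ := hMP.integrable_birkhoffSum hg.abs m
  obtain ⟨c, hc⟩ := (hW.tendsto_integral_posPart_sub.eventually_le_const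
    (by positivity : 0 < ε / 4 * m)).exists
  filter_upwards [tendsto_natCast_atTop_atTop.eventually_ge_atTop ((m : ℝ) + 2 * c / ε)]
    with N hN
  set Q := N / m + 1
  have hTm := hMP.iterate m
  set A := birkhoffSum T^[m] (fun y => |birkhoffSum T g m y|) Q
  set E := birkhoffSum T^[m] (fun y => (W y - c)⁺) Q
  have hA : Integrable A μ := hTm.integrable_birkhoffSum (hMP.integrable_birkhoffSum hg m).abs Q
  have hE : Integrable E μ := hTm.integrable_birkhoffSum (hW.sub (integrable_const c)).pos_part Q
  have hAE : Integrable (fun x => A x + E x) μ := hA.add hE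
  refine ⟨fun x => A x + E x + c, hAE.add (integrable_const c), ?_,
    fun x k hk => abs_birkhoffSum_le_blocks g hm (hk.trans (Nat.lt_mul_div_succ N hm)) c x⟩
  have hQ : (Q : ℝ) * m ≤ N + m := by
    have := Nat.div_mul_le_self N m
    exact_mod_cast (by simp only [Q]; nlinarith : Q * m ≤ N + m)
  have hN' : ε * m + 2 * c ≤ ε * N := by
    have := mul_le_mul_of_nonneg_left hN hε.le
    rwa [mul_add, mul_div_cancel₀ _ hε.ne'] at this
  rw [integral_add hAE (integrable_const c), integral_add hA hE,
    hTm.integral_birkhoffSum (hMP.integrable_birkhoffSum hg m).abs,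
    hTm.integral_birkhoffSum (g := fun y => (W y - c)⁺) (hW.sub (integrable_const c)).pos_part]
  simp only [integral_const, probReal_univ, one_smul]
  have hQ0 : (0 : ℝ) ≤ Q := Q.cast_nonneg
  nlinarith [mul_le_mul_of_nonneg_left hSm hQ0, mul_le_mul_of_nonneg_left hc hQ0]

theorem Ergodic.measure_eq_zero_of_forall_birkhoffSum_ne_zero [IsProbabilityMeasure μ]
    (hT : Ergodic T μ) {f : X → ℤ} (hf : Integrable (fun x => (f x : ℝ)) μ)
    (hf0 : ∫ x, (f x : ℝ) ∂μ = 0) {D : Set X} (hDm : MeasurableSet D)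
    (hD : ∀ y ∈ D, ∀ n, 0 < n → T^[n] y ∈ D → birkhoffSum T f n y ≠ 0) : μ D = 0 := by
  classical
  have hMP := hT.toMeasurePreserving
  by_contra hD0
  have hδ : 0 < μ.real D := ENNReal.toReal_pos hD0 (measure_ne_top μ D)
  obtain ⟨N, ⟨Φ, hΦi, hΦ, hbound⟩, hN⟩ :=
    ((hT.eventually_exists_abs_birkhoffSum_le hf hf0 (by positivity : 0 < μ.real D / 4)).and
      (tendsto_natCast_atTop_atTop.eventually_gt_atTop (2 / μ.real D))).exists
  have hN0 : 0 < N := by exact_mod_cast (by positivity : (0 : ℝ) < 2 / μ.real D).trans hN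
  have hvisits (x : X) : birkhoffSum T (D.indicator 1) N x ≤ 2 * Φ x + 1 := by
    have hΦ0 : 0 ≤ Φ x := (abs_nonneg _).trans (hbound x 0 hN0)
    have hb (k : ℕ) (hk : k < N) : |birkhoffSum T f k x| ≤ ⌊Φ x⌋₊ := by
      rw [Int.abs_eq_natAbs]
      exact_mod_cast Nat.le_floor (by simpa [Nat.cast_natAbs, birkhoffSum] using hbound x k hk)
    calc birkhoffSum T (D.indicator 1) N x = (#{k ∈ range N | T^[k] x ∈ D} : ℝ) := by
          simp only [birkhoffSum, Set.indicator_apply, Pi.one_apply, natCast_card_filter]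
      _ ≤ ((2 * ⌊Φ x⌋₊ + 1 : ℕ) : ℝ) := by exact_mod_cast card_filter_iterate_mem_le hD hb
      _ ≤ 2 * Φ x + 1 := by push_cast; linarith [Nat.floor_le hΦ0]
  have hind : Integrable (D.indicator (1 : X → ℝ)) μ := (integrable_const 1).indicator hDm
  have hcount : N * μ.real D ≤ 2 * (μ.real D / 4 * N) + 1 :=
    calc N * μ.real D = ∫ x, birkhoffSum T (D.indicator 1) N x ∂μ := by
          rw [hMP.integral_birkhoffSum hind, integral_indicator_one hDm]
      _ ≤ ∫ x, (2 * Φ x + 1) ∂μ :=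
          integral_mono (hMP.integrable_birkhoffSum hind N)
            ((hΦi.const_mul 2).add (integrable_const 1)) hvisits
      _ = 2 * ∫ x, Φ x ∂μ + 1 := by
          rw [integral_add (hΦi.const_mul 2) (integrable_const 1), integral_const_mul]
          simp
      _ ≤ 2 * (μ.real D / 4 * N) + 1 := by linarith
  have := (div_lt_iff₀ hδ).1 hN
  linarith

end Ergodic

theorem krygin_atkinson_recurrence_general {X : Type*} [MeasurableSpace X] (μ : Measure X)
    [IsProbabilityMeasure μ] (S : X ≃ᵐ X) (hS : Ergodic (⇑S) μ)
    (f : X → ℤ) (hf : Measurable f)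
    (hfi : Integrable (fun x => (f x : ℝ)) μ)
    (hf0 : ∫ x, (f x : ℝ) ∂μ = 0)
    (B : Set X) (hB : MeasurableSet B) :
    ∀ᵐ x ∂μ, x ∈ B → ∃ᶠ n in atTop,
      0 < n ∧ (⇑S)^[n] x ∈ B ∧ ∑ i ∈ Finset.range n, f ((⇑S)^[i] x) = 0 := by
  set D := {y | y ∈ B ∧ ∀ n, 0 < n → (⇑S)^[n] y ∈ B → birkhoffSum S f n y ≠ 0}
  have hbirkhoff (n : ℕ) : Measurable (birkhoffSum S f n) :=
    Finset.measurable_sum _ fun i _ => hf.comp (S.measurable.iterate i)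
  have hDm : MeasurableSet D := Measurable.setOf (by fun_prop)
  have hD : μ D = 0 := hS.measure_eq_zero_of_forall_birkhoffSum_ne_zero hfi hf0 hDm
    fun y hy n hn hnD => hy.2 n hn hnD.1
  have hnull : μ (⋃ n, (⇑S)^[n] ⁻¹' D) = 0 := measure_iUnion_null fun n => by
    rwa [(hS.toMeasurePreserving.iterate n).measure_preimage hDm.nullMeasurableSet]
  filter_upwards [measure_eq_zero_iff_ae_notMem.1 hnull] with x hx hxB
  have hmem (n : ℕ) : (cylinderCascade S f)^[n] (x, 0) ∈ B ×ˢ {0} ↔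
      (⇑S)^[n] x ∈ B ∧ birkhoffSum S f n x = 0 := by
    simp [cylinderCascade_iterate]
  by_contra h
  obtain ⟨n, hn, hlast⟩ := Function.exists_iterate_mem_forall_iterate_notMem
    (T := cylinderCascade S f) (s := B ×ˢ {0}) (x := (x, 0)) (by simpa using hxB)
    fun hfreq => h (((eventually_gt_atTop 0).and_frequently hfreq).mono
      fun n ⟨hn, hC⟩ => ⟨hn, (hmem n).1 hC⟩)
  rw [hmem] at hn
  refine hx (Set.mem_iUnion.2 ⟨n, hn.1, fun m hm hmB hm0 => hlast m hm ?_⟩)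
  rw [cylinderCascade_iterate S f n, hn.2, cylinderCascade_iterate]
  simp [hmB, hm0]

/-- **Recurrence form of the Krygin–Atkinson theorem.** For an ergodic invertible
measure-preserving transformation `S` of a probability space `(X, μ)` and an
integrable `f : X → ℤ` with zero mean, for every set `B` of positive measure and
almost every `x ∈ B`, there are infinitely many positive `n` with `S^[n] x ∈ B`
and vanishing Birkhoff sum. -/
theorem krygin_atkinson_recurrence {X : Type*} [MeasurableSpace X] (μ : Measure X)
    [IsProbabilityMeasure μ] (S : X ≃ᵐ X) (hS : Ergodic (⇑S) μ)
    (f : X → ℤ) (hf : Measurable f)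
    (hfi : Integrable (fun x => (f x : ℝ)) μ)
    (hf0 : ∫ x, (f x : ℝ) ∂μ = 0)
    (B : Set X) (hB : MeasurableSet B) (hBpos : 0 < μ B) :
    ∀ᵐ x ∂μ, x ∈ B → ∃ᶠ n in atTop,
      0 < n ∧ (⇑S)^[n] x ∈ B ∧ ∑ i ∈ Finset.range n, f ((⇑S)^[i] x) = 0 :=
  krygin_atkinson_recurrence_general μ S hS f hf hfi hf0 B hB
end

section
/- Let (X, μ) be a probability space, S an invertible measure-preserving transformation of (X, μ), and f : X → ℤ a measurable function such that for every ε > 0, μ({x : |∑_{i=0}^{n-1} f(S^i x)| > ε n}) → 0 as n → ∞. Then for μ-almost every x ∈ X there exist infinitely many positive integers n with ∑_{i=0}^{n-1} f(S^i x) = 0. -/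
/-!
Let `B` be the set of points from which the Birkhoff sums of `f` never return to `0`. Along
any orbit, the Birkhoff sums at the times of the visits to `B` are pairwise distinct integers:
equal sums at two such times would mean a return to `0` from the earlier one. So among the first
`n` times there are at most `2εn + 1` visits to `B` at which the Birkhoff sum is at most `εn`
in absolute value. Integrating, `n μ(B) ≤ 2εn + 1 + ∑_{j<n} μ{|S_j f| > εj}`, and the last sum is
`o(n)` by the hypothesis and Cesàro, so `μ(B) = 0`. A point whose orbit never meets `B` comes
back to a zero of its Birkhoff sums after each one, hence has infinitely many.
-/

open MeasureTheory Filter Topology ENNReal Finset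

open scoped Classical in
theorem sum_measure_le_mul_measure_univ {X ι : Type*} [MeasurableSpace X] (μ : Measure X)
    {s : Finset ι} {A : ι → Set X} (hA : ∀ j ∈ s, MeasurableSet (A j)) {k : ℕ}
    (hk : ∀ x, #{j ∈ s | x ∈ A j} ≤ k) :
    ∑ j ∈ s, μ (A j) ≤ k * μ Set.univ := by
  calc ∑ j ∈ s, μ (A j) = ∫⁻ x, ∑ j ∈ s, (A j).indicator 1 x ∂μ := by
        rw [lintegral_finsetSum _ fun j hj => measurable_one.indicator (hA j hj)]
        exact sum_congr rfl fun j hj => (lintegral_indicator_one (hA j hj)).symm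
    _ = ∫⁻ x, (#{j ∈ s | x ∈ A j} : ℝ≥0∞) ∂μ := by
        simp only [Set.indicator_apply, Pi.one_apply, sum_boole]
    _ ≤ ∫⁻ _, (k : ℝ≥0∞) ∂μ := lintegral_mono fun x => Nat.cast_le.2 (hk x)
    _ = k * μ Set.univ := lintegral_const _

theorem Measurable.birkhoffSum {X M : Type*} [MeasurableSpace X] [AddCommMonoid M]
    [MeasurableSpace M] [MeasurableAdd₂ M] {S : X → X} {g : X → M} (hS : Measurable S)
    (hg : Measurable g) (n : ℕ) : Measurable (birkhoffSum S g n) :=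
  Finset.measurable_sum _ fun i _ => hg.comp (hS.iterate i)

section
variable {X : Type*} {S : X → X} {f : X → ℤ}

def nonReturnSet (S : X → X) (f : X → ℤ) : Set X :=
  {y | ∀ d, 0 < d → birkhoffSum S f d y ≠ 0}

theorem injOn_birkhoffSum_visits_nonReturnSet (x : X) :
    Set.InjOn (birkhoffSum S f · x) {j | S^[j] x ∈ nonReturnSet S f} := by
  have hne : ∀ j k, S^[j] x ∈ nonReturnSet S f → j < k →
      birkhoffSum S f j x ≠ birkhoffSum S f k x := by
    intro j k hj hjk heq
    obtain ⟨d, rfl⟩ := Nat.exists_eq_add_of_le hjk.le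
    rw [birkhoffSum_add, left_eq_add] at heq
    exact hj d (by omega) heq
  intro j hj k hk heq
  by_contra hjk
  rcases Ne.lt_or_gt hjk with h | h
  · exact hne j k hj h heq
  · exact hne k j hk h heq.symm

open scoped Classical in
theorem card_visits_nonReturnSet_le (x : X) (s : Finset ℕ) (c : ℕ) :
    #{j ∈ s | S^[j] x ∈ nonReturnSet S f ∧ |birkhoffSum S f j x| ≤ c} ≤ 2 * c + 1 := by
  calc _ ≤ #(Icc (-c : ℤ) c) :=
        card_le_card_of_injOn _ (fun j hj => mem_Icc.2 (abs_le.1 (mem_filter.1 hj).2.2))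
          ((injOn_birkhoffSum_visits_nonReturnSet x).mono fun j hj => (mem_filter.1 hj).2.1)
    _ = 2 * c + 1 := by simp; omega

theorem frequently_birkhoffSum_eq_zero_of_iterate_notMem {x : X}
    (hx : ∀ k, S^[k] x ∉ nonReturnSet S f) :
    ∃ᶠ n in atTop, 0 < n ∧ birkhoffSum S f n x = 0 := by
  have hnext : ∀ k, birkhoffSum S f k x = 0 → ∃ l, k < l ∧ birkhoffSum S f l x = 0 := by
    intro k hk
    obtain ⟨d, hd, hzero⟩ : ∃ d, 0 < d ∧ birkhoffSum S f d (S^[k] x) = 0 := by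
      simpa [nonReturnSet] using hx k
    exact ⟨k + d, by omega, by rw [birkhoffSum_add, hk, hzero, add_zero]⟩
  have hge : ∀ N, ∃ l, N ≤ l ∧ birkhoffSum S f l x = 0 := by
    intro N
    induction N with
    | zero => exact ⟨0, le_rfl, birkhoffSum_zero _ _ _⟩
    | succ N ih =>
      obtain ⟨k, hNk, hk⟩ := ih
      obtain ⟨l, hkl, hl⟩ := hnext k hk
      exact ⟨l, by omega, hl⟩
  refine frequently_atTop.2 fun N => ?_
  obtain ⟨l, hl, hzero⟩ := hge (N + 1)
  exact ⟨l, by omega, by omega, hzero⟩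

end

section
variable {X : Type*} [MeasurableSpace X] {S : X → X} {f : X → ℤ}

theorem measurableSet_nonReturnSet (hS : Measurable S) (hf : Measurable f) :
    MeasurableSet (nonReturnSet S f) := by
  simp only [nonReturnSet, Set.ofPred_forall]
  exact .iInter fun d => .iInter fun _ => hS.birkhoffSum hf d (.of_discrete (s := {0}ᶜ))

theorem natCast_mul_measure_nonReturnSet_le (μ : Measure X) (hS : MeasurePreserving S μ μ)
    (hf : Measurable f) (n c : ℕ) :
    n * μ (nonReturnSet S f) ≤
      (2 * c + 1) * μ Set.univ + ∑ j ∈ range n, μ {x | (c : ℤ) < |birkhoffSum S f j x|} := by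
  have hB := measurableSet_nonReturnSet hS.measurable hf
  calc (n : ℝ≥0∞) * μ (nonReturnSet S f) = ∑ j ∈ range n, μ (S^[j] ⁻¹' nonReturnSet S f) := by
        simp [(hS.iterate _).measure_preimage hB.nullMeasurableSet]
    _ ≤ ∑ j ∈ range n, (μ (S^[j] ⁻¹' nonReturnSet S f ∩ {x | |birkhoffSum S f j x| ≤ c}) +
          μ {x | (c : ℤ) < |birkhoffSum S f j x|}) := by
        gcongr with j
        refine (measure_le_inter_add_sdiff _ _ {x | |birkhoffSum S f j x| ≤ c}).trans ?_
        gcongr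
        exact fun x hx => by simpa using hx.2
    _ ≤ _ := by
        rw [sum_add_distrib]
        gcongr
        have := sum_measure_le_mul_measure_univ μ
          (A := fun j => S^[j] ⁻¹' nonReturnSet S f ∩ {x | |birkhoffSum S f j x| ≤ c})
          (fun j _ => (hS.measurable.iterate j hB).inter
            (hS.measurable.birkhoffSum hf j (.of_discrete (s := {z : ℤ | |z| ≤ c}))))
          fun x => by
            -- the two filters differ only in their decidability instances
            convert card_visits_nonReturnSet_le (S := S) (f := f) x (range n) c using 4
            exact Iff.rfl
        exact_mod_cast this

theorem natCast_mul_measureReal_nonReturnSet_le (μ : Measure X) [IsFiniteMeasure μ]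
    (hS : MeasurePreserving S μ μ) (hf : Measurable f) {ε : ℝ} (hε : 0 ≤ ε) (n : ℕ) :
    n * μ.real (nonReturnSet S f) ≤ (2 * ε * n + 1) * μ.real Set.univ +
      ∑ j ∈ range n, μ.real {x | ε * j < |((birkhoffSum S f j x : ℤ) : ℝ)|} := by
  set c := ⌊ε * n⌋₊
  have hsub : ∀ j ∈ range n, {x | (c : ℤ) < |birkhoffSum S f j x|} ⊆
      {x | ε * j < |((birkhoffSum S f j x : ℤ) : ℝ)|} := by
    intro j hj x hx
    have hcx : (c : ℝ) + 1 ≤ |((birkhoffSum S f j x : ℤ) : ℝ)| := by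
      exact_mod_cast (hx : (c : ℤ) < _)
    have hjn : (j : ℝ) ≤ n := by exact_mod_cast (mem_range.1 hj).le
    calc ε * j ≤ ε * n := by gcongr
      _ < c + 1 := Nat.lt_floor_add_one _
      _ ≤ _ := hcx
  have h := (natCast_mul_measure_nonReturnSet_le μ hS hf n c).trans
    (add_le_add_right (sum_le_sum fun j hj => measure_mono (hsub j hj)) _)
  have hfin₁ : (2 * c + 1 : ℝ≥0∞) * μ Set.univ ≠ ∞ :=
    ENNReal.mul_ne_top (by norm_cast; exact ENNReal.natCast_ne_top _) (measure_ne_top _ _)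
  have hfin₂ : ∑ j ∈ range n, μ {x | ε * j < |((birkhoffSum S f j x : ℤ) : ℝ)|} ≠ ∞ :=
    ENNReal.sum_ne_top.2 fun _ _ => measure_ne_top _ _
  have hreal := ENNReal.toReal_mono (ENNReal.add_ne_top.2 ⟨hfin₁, hfin₂⟩) h
  rw [ENNReal.toReal_add hfin₁ hfin₂, ENNReal.toReal_sum fun _ _ => measure_ne_top _ _] at hreal
  have hcast : (2 * c + 1 : ℝ≥0∞) = ((2 * c + 1 : ℕ) : ℝ≥0∞) := by push_cast; rfl
  simp only [ENNReal.toReal_mul, hcast, ENNReal.toReal_natCast, ← measureReal_def] at hreal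
  refine hreal.trans ?_
  gcongr
  push_cast
  have := Nat.floor_le (mul_nonneg hε n.cast_nonneg)
  linarith

theorem measureReal_nonReturnSet_le (μ : Measure X) [IsFiniteMeasure μ]
    (hS : MeasurePreserving S μ μ) (hf : Measurable f) {ε : ℝ} (hε : 0 < ε)
    (hsmall : Tendsto (fun n : ℕ => μ {x | ε * n < |((birkhoffSum S f n x : ℤ) : ℝ)|}) atTop
      (𝓝 0)) :
    μ.real (nonReturnSet S f) ≤ 2 * ε * μ.real Set.univ := by
  set C := μ.real Set.univ
  set a : ℕ → ℝ := fun j => μ.real {x | ε * j < |((birkhoffSum S f j x : ℤ) : ℝ)|}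
  have ha : Tendsto a atTop (𝓝 0) := (ENNReal.tendsto_toReal zero_ne_top).comp hsmall
  have hn : ∀ n : ℕ, 0 < n →
      μ.real (nonReturnSet S f) ≤ (2 * ε + (n : ℝ)⁻¹) * C + (n : ℝ)⁻¹ * ∑ j ∈ range n, a j := by
    intro n hn
    have hn' : (n : ℝ) ≠ 0 := by positivity
    calc μ.real (nonReturnSet S f) = (n : ℝ)⁻¹ * (n * μ.real (nonReturnSet S f)) := by
          field_simp
      _ ≤ (n : ℝ)⁻¹ * ((2 * ε * n + 1) * C + ∑ j ∈ range n, a j) := by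
          gcongr
          exact natCast_mul_measureReal_nonReturnSet_le μ hS hf hε.le n
      _ = _ := by field_simp
  have hlim : Tendsto (fun n : ℕ => (2 * ε + (n : ℝ)⁻¹) * C + (n : ℝ)⁻¹ * ∑ j ∈ range n, a j)
      atTop (𝓝 (2 * ε * C)) := by
    simpa using ((tendsto_const_nhds.add tendsto_inv_atTop_nhds_zero_nat).mul_const C).add
      ha.cesaro
  exact ge_of_tendsto hlim (eventually_atTop.2 ⟨1, hn⟩)

theorem measure_nonReturnSet_eq_zero (μ : Measure X) [IsFiniteMeasure μ]
    (hS : MeasurePreserving S μ μ) (hf : Measurable f)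
    (hsmall : ∀ ε : ℝ, 0 < ε →
      Tendsto (fun n : ℕ => μ {x | ε * n < |((birkhoffSum S f n x : ℤ) : ℝ)|}) atTop (𝓝 0)) :
    μ (nonReturnSet S f) = 0 := by
  have hlim : Tendsto (fun ε : ℝ => 2 * ε * μ.real Set.univ) (𝓝[>] 0) (𝓝 0) :=
    tendsto_nhdsWithin_of_tendsto_nhds (Continuous.tendsto' (by fun_prop) _ _ (by simp))
  have hle := ge_of_tendsto hlim (eventually_nhdsWithin_of_forall fun ε hε =>
    measureReal_nonReturnSet_le μ hS hf hε (hsmall ε hε))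
  exact (measureReal_eq_zero_iff).1 (hle.antisymm measureReal_nonneg)

end

/-- **Theorem D (after B. Weiss).** Let `S` be an invertible measure-preserving
transformation of a probability space `(X, μ)` and `f : X → ℤ` measurable such
that `μ {x : |∑_{i<n} f(S^i x)| > ε n} → 0` for every `ε > 0`. Then for almost
every `x` the Birkhoff sums of `f` vanish at infinitely many positive times. -/
theorem weiss_recurrence {X : Type*} [MeasurableSpace X] (μ : Measure X)
    [IsProbabilityMeasure μ] (S : X ≃ᵐ X) (hS : MeasurePreserving (⇑S) μ μ)
    (f : X → ℤ) (hf : Measurable f)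
    (hweiss : ∀ ε : ℝ, 0 < ε →
      Tendsto (fun n : ℕ =>
          μ {x | ε * n < |∑ i ∈ Finset.range n, (f ((⇑S)^[i] x) : ℝ)|})
        atTop (𝓝 (0 : ℝ≥0∞))) :
    ∀ᵐ x ∂μ, ∃ᶠ n in atTop,
      0 < n ∧ ∑ i ∈ Finset.range n, f ((⇑S)^[i] x) = 0 := by
  have hnull := measure_nonReturnSet_eq_zero μ hS hf (by simpa [birkhoffSum] using hweiss)
  have hvisit : ∀ᵐ x ∂μ, ∀ k, (⇑S)^[k] x ∉ nonReturnSet S f := ae_all_iff.2 fun k =>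
    (hS.iterate k).quasiMeasurePreserving.ae (measure_eq_zero_iff_ae_notMem.1 hnull)
  filter_upwards [hvisit] with x hx
  exact frequently_birkhoffSum_eq_zero_of_iterate_notMem hx
end
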